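/- Let n ≥ 3, let U ⊆ ℝⁿ be open, and let σ and σ′ be two smooth maps from U to 1-forms, each satisfying the flat conformal Killing equation with k = 1. Define S(x)(a,b) := σ(x)(a)σ′(x)(b) + σ(x)(b)σ′(x)(a). Then there exists a smooth map λ from U to linear functionals on ℝⁿ such that for all x ∈ U and all a, b, c ∈ ℝⁿ: (DS(x)a)(b,c) + (DS(x)b)(c,a) + (DS(x)c)(a,b) = ⟨a,b⟩λ(x)(c) + ⟨b,c⟩λ(x)(a) + ⟨c,a⟩λ(x)(b); that is, the symmetric product of two conformal Killing 1-forms is (after removing the trace) a conformal Killing 2-tensor. (This is the Euclidean, m = 2, rank-(1,1) instance of the theorem producing conformal Killing tensors from collections of conformal Killing forms.) -/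

import Mathlib

open scoped RealInnerProductSpace BigOperators

noncomputable section

/-- Euclidean `n`-space. -/
abbrev Euc (n : ℕ) : Type := EuclideanSpace ℝ (Fin n)

/-- Continuous `k`-linear maps `(ℝⁿ)ᵏ → ℝ`. -/
abbrev FormML (n k : ℕ) : Type :=
  ContinuousMultilinearMap ℝ (fun _ : Fin k => Euc n) ℝ

/-- A multilinear map is alternating (vanishes when two arguments coincide);
together with multilinearity this makes it a `k`-form. -/
def IsAlt {n k : ℕ} (f : FormML n k) : Prop :=
  ∀ (v : Fin k → Euc n) (i j : Fin k), i ≠ j → v i = v j → f v = 0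

/-- The tuple `a` with its `i`-th entry omitted. -/
def omitArg {X : Type*} {k : ℕ} (i : Fin k) (a : Fin k → X) (j : Fin (k - 1)) : X :=
  if (j : ℕ) < (i : ℕ) then a ⟨j, by have := j.isLt; have := i.isLt; omega⟩
  else a ⟨(j : ℕ) + 1, by have := j.isLt; omega⟩

/-- The tuple `(c, d₁, …, d_{k-1})`. -/
def consCast {X : Type*} {k : ℕ} (c : X) (d : Fin (k - 1) → X) (j : Fin k) : X :=
  if h : (j : ℕ) = 0 then c else d ⟨(j : ℕ) - 1, by have := j.isLt; omega⟩

/-- The flat (Euclidean) conformal Killing equation on `k`-forms: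
`σ` is smooth on `U`, valued in alternating maps, and there are smooth form-valued
`τ` (degree `k-1`) and `ρ` (degree `k+1`) with
`(Dσ(x)c)(a₁,…,a_k) = Σᵢ (-1)^(i+1) ⟨c,aᵢ⟩ τ(x)(a₁,…,âᵢ,…,a_k) + ρ(x)(c,a₁,…,a_k)`. -/
def FlatCKF (n k : ℕ) (U : Set (Euc n)) (σ : Euc n → FormML n k) : Prop :=
  ContDiffOn ℝ (⊤ : ℕ∞) σ U ∧ (∀ x ∈ U, IsAlt (σ x)) ∧
  ∃ (τ : Euc n → FormML n (k - 1)) (ρ : Euc n → FormML n (k + 1)),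
    ContDiffOn ℝ (⊤ : ℕ∞) τ U ∧ ContDiffOn ℝ (⊤ : ℕ∞) ρ U ∧
    (∀ x ∈ U, IsAlt (τ x)) ∧ (∀ x ∈ U, IsAlt (ρ x)) ∧
    ∀ x ∈ U, ∀ (c : Euc n) (a : Fin k → Euc n),
      (fderiv ℝ σ x c) a =
        (∑ i : Fin k, (-1 : ℝ) ^ (i : ℕ) * ⟪c, a i⟫ * τ x (omitArg i a))
        + ρ x (consCast c a)

/-! The Killing equation says `Dσ` is pure trace plus an alternating part; in the cyclic sum
of `D(σ ⊙ σ')` the alternating parts cancel and only the trace parts survive, which gives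
`λ = 2 (τ σ' + τ' σ)`, where `τ, τ'` are the trace parts of `Dσ, Dσ'`. -/

section

variable {n : ℕ}

def IsAlt.toAlternatingMap {k : ℕ} {f : FormML n k} (hf : IsAlt f) :
    Euc n [⋀^Fin k]→ₗ[ℝ] ℝ :=
  { f.toMultilinearMap with map_eq_zero_of_eq' := fun v i j hv hij => hf v i j hij hv }

lemma IsAlt.apply_swap {k : ℕ} {f : FormML n k} (hf : IsAlt f) (v : Fin k → Euc n)
    {i j : Fin k} (hij : i ≠ j) : f (v ∘ Equiv.swap i j) = -f v :=
  hf.toAlternatingMap.map_swap v hij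

lemma IsAlt.apply_vec_swap {f : FormML n 2} (hf : IsAlt f) (a b : Euc n) :
    f ![b, a] = -f ![a, b] := by
  convert hf.apply_swap ![a, b] (zero_ne_one (α := Fin 2)) using 2
  ext i
  fin_cases i <;> rfl

lemma continuousMultilinearCurryFin1_apply_vec (f : FormML n 1) (v : Euc n) :
    continuousMultilinearCurryFin1 ℝ (Euc n) ℝ f v = f ![v] := by
  rw [continuousMultilinearCurryFin1_apply]
  congr 1
  ext i
  fin_cases i
  rfl

lemma FlatCKF.exists_trace_add_alt {U : Set (Euc n)} {σ : Euc n → FormML n 1}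
    (hσ : FlatCKF n 1 U σ) :
    ∃ (τ : Euc n → ℝ) (ρ : Euc n → FormML n 2), ContDiffOn ℝ (⊤ : ℕ∞) τ U ∧
      (∀ x ∈ U, IsAlt (ρ x)) ∧
      ∀ x ∈ U, ∀ c v : Euc n, fderiv ℝ σ x c ![v] = ⟪c, v⟫ * τ x + ρ x ![c, v] := by
  obtain ⟨-, -, τ, ρ, hτ, -, -, hρ, hD⟩ := hσ
  refine ⟨fun x => τ x ![], ρ, ?_, hρ, fun x hx c v => ?_⟩
  · exact (ContinuousMultilinearMap.apply ℝ _ ℝ ![]).contDiff.comp_contDiffOn hτ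
  · rw [hD x hx c ![v], Fin.sum_univ_one]
    congr 2
    · simp
    · ext j
      fin_cases j <;> rfl

lemma fderiv_symmetric_product {σ σ' : Euc n → FormML n 1} {x : Euc n}
    (hσ : DifferentiableAt ℝ σ x) (hσ' : DifferentiableAt ℝ σ' x) (u v d : Euc n) :
    fderiv ℝ (fun y => σ y ![u] * σ' y ![v] + σ y ![v] * σ' y ![u]) x d
      = fderiv ℝ σ x d ![u] * σ' x ![v] + σ x ![u] * fderiv ℝ σ' x d ![v]
        + (fderiv ℝ σ x d ![v] * σ' x ![u] + σ x ![v] * fderiv ℝ σ' x d ![u]) := by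
  have h := fun (f : Euc n → FormML n 1) (hf : DifferentiableAt ℝ f x) (w : Euc n) =>
    hf.continuousMultilinear_apply_const ![w]
  rw [fderiv_fun_add ((h σ hσ u).fun_mul (h σ' hσ' v)) ((h σ hσ v).fun_mul (h σ' hσ' u)),
    fderiv_fun_mul (h σ hσ u) (h σ' hσ' v), fderiv_fun_mul (h σ hσ v) (h σ' hσ' u)]
  simp only [add_apply, smul_apply, smul_eq_mul,
    fderiv_continuousMultilinear_apply_const_apply hσ,
    fderiv_continuousMultilinear_apply_const_apply hσ']
  ring

end

theorem flat_conformal_killing_one_forms_product_is_conformal_Killing_tensor_general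
    (n : ℕ)
    (U : Set (Euc n)) (hU : IsOpen U)
    (σ σ' : Euc n → FormML n 1)
    (hσ : FlatCKF n 1 U σ) (hσ' : FlatCKF n 1 U σ') :
    ∃ lam : Euc n → (Euc n →L[ℝ] ℝ),
      ContDiffOn ℝ (⊤ : ℕ∞) lam U ∧
      ∀ x ∈ U, ∀ a b c : Euc n,
        fderiv ℝ (fun y => σ y ![b] * σ' y ![c] + σ y ![c] * σ' y ![b]) x a
        + fderiv ℝ (fun y => σ y ![c] * σ' y ![a] + σ y ![a] * σ' y ![c]) x b
        + fderiv ℝ (fun y => σ y ![a] * σ' y ![b] + σ y ![b] * σ' y ![a]) x c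
        = ⟪a, b⟫ * lam x c + ⟪b, c⟫ * lam x a + ⟪c, a⟫ * lam x b := by
  obtain ⟨τ, ρ, hτ, hρ, hDσ⟩ := hσ.exists_trace_add_alt
  obtain ⟨τ', ρ', hτ', hρ', hDσ'⟩ := hσ'.exists_trace_add_alt
  let e := continuousMultilinearCurryFin1 ℝ (Euc n) ℝ
  refine ⟨fun x => (2 * τ x) • e (σ' x) + (2 * τ' x) • e (σ x), ?_, fun x hx a b c => ?_⟩
  · have he : ContDiff ℝ (⊤ : ℕ∞) e := e.contDiff
    exact ((contDiffOn_const.mul hτ).smul (he.comp_contDiffOn hσ'.1)).add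
      ((contDiffOn_const.mul hτ').smul (he.comp_contDiffOn hσ.1))
  have hdiff : ∀ {f : Euc n → FormML n 1}, FlatCKF n 1 U f → DifferentiableAt ℝ f x :=
    fun hf => (hf.1.contDiffAt (hU.mem_nhds hx)).differentiableAt (by simp)
  simp only [fderiv_symmetric_product (hdiff hσ) (hdiff hσ'), hDσ x hx, hDσ' x hx,
    add_apply, smul_apply, smul_eq_mul, e, continuousMultilinearCurryFin1_apply_vec,
    (hρ x hx).apply_vec_swap c a, (hρ x hx).apply_vec_swap c b, (hρ x hx).apply_vec_swap b a,
    (hρ' x hx).apply_vec_swap c a, (hρ' x hx).apply_vec_swap c b,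
    (hρ' x hx).apply_vec_swap b a, real_inner_comm a b, real_inner_comm b c,
    real_inner_comm c a]
  ring

/-- The symmetric product `S(x)(a,b) = σ(x)(a)σ'(x)(b) + σ(x)(b)σ'(x)(a)`
of two flat conformal Killing 1-forms has pure-trace symmetrized derivative, i.e. its
trace-free part is a conformal Killing 2-tensor. -/
theorem flat_conformal_killing_one_forms_product_is_conformal_Killing_tensor
    (n : ℕ) (hn : 3 ≤ n)
    (U : Set (Euc n)) (hU : IsOpen U)
    (σ σ' : Euc n → FormML n 1)
    (hσ : FlatCKF n 1 U σ) (hσ' : FlatCKF n 1 U σ') :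
    ∃ lam : Euc n → (Euc n →L[ℝ] ℝ),
      ContDiffOn ℝ (⊤ : ℕ∞) lam U ∧
      ∀ x ∈ U, ∀ a b c : Euc n,
        fderiv ℝ (fun y => σ y ![b] * σ' y ![c] + σ y ![c] * σ' y ![b]) x a
        + fderiv ℝ (fun y => σ y ![c] * σ' y ![a] + σ y ![a] * σ' y ![c]) x b
        + fderiv ℝ (fun y => σ y ![a] * σ' y ![b] + σ y ![b] * σ' y ![a]) x c
        = ⟪a, b⟫ * lam x c + ⟪b, c⟫ * lam x a + ⟪c, a⟫ * lam x b :=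
  flat_conformal_killing_one_forms_product_is_conformal_Killing_tensor_general n U hU σ σ' hσ hσ'
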